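/- arXiv:1908.10665 — 2 statements merged into one kernel-verified Lean document; each statement's English description precedes it below -/
import Mathlib

section
/- Let S = M[G;I,Λ;P] be a normalised Rees matrix semigroup over a countable group G with countable index sets I, Λ, which is homogeneous as a completely simple semigroup. Let H be a finite subset of G^P, let J be a finite subset of I containing 1_I, and let ψ : J → J be a bijection fixing 1_I. Then there exist bijections σ : I → I extending ψ and τ : Λ → Λ with τ(1_Λ) = 1_Λ such that P(τ(λ), σ(i)) = P(λ,i) for all λ ∈ Λ and i ∈ I with P(λ,i) ∈ H. The dual statement holds for finite subsets of Λ. -/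
section CSDefs

variable {S : Type*}

/-- Closure of a subset under a binary operation `op` and a unary operation `star`. -/
inductive CSClosure (op : S → S → S) (star : S → S) (X : Set S) : S → Prop
  | base {x : S} : x ∈ X → CSClosure op star X x
  | mul {x y : S} : CSClosure op star X x → CSClosure op star X y →
      CSClosure op star X (op x y)
  | inv {x : S} : CSClosure op star X x → CSClosure op star X (star x)

/-- Homogeneity as a completely simple semigroup, for the completely simple semigroup with
carrier `S`, multiplication `op` and unary operation `star` (inversion in the maximal
subgroup): every multiplication-preserving bijection between finitely generated
`(op, star)`-closed subsemigroups extends to an automorphism of `S`. -/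
def IsCSHomogeneous (op : S → S → S) (star : S → S) : Prop :=
  ∀ (X Y : Finset S) (φ : S → S),
    Set.BijOn φ {s | CSClosure op star (X : Set S) s} {s | CSClosure op star (Y : Set S) s} →
    (∀ x y : S, CSClosure op star (X : Set S) x → CSClosure op star (X : Set S) y →
      φ (op x y) = op (φ x) (φ y)) →
    ∃ Φ : S → S, Function.Bijective Φ ∧
      (∀ x y : S, Φ (op x y) = op (Φ x) (Φ y)) ∧
      ∀ x : S, CSClosure op star (X : Set S) x → Φ x = φ x

end CSDefs

/-- A countable group is homogeneous if every isomorphism between finitely generated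
subgroups extends to an automorphism. -/
def IsHomogeneousGroup (G : Type*) [Group G] : Prop :=
  ∀ (A B : Subgroup G), A.FG → B.FG → ∀ e : A ≃* B,
    ∃ Φ : G ≃* G, ∀ a : A, Φ (a : G) = ((e a : B) : G)

section Rees

variable {G H I Λ J M : Type*} [Group G] [Group H]

/-- Multiplication of the Rees matrix semigroup `M[G;I,Λ;P]`. -/
def reesMul (P : Λ → I → G) (x y : I × G × Λ) : I × G × Λ :=
  (x.1, x.2.1 * P x.2.2 y.1 * y.2.1, y.2.2)

/-- The unary operation on `M[G;I,Λ;P]` sending an element to its inverse in its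
maximal subgroup. -/
def reesInv (P : Λ → I → G) (x : I × G × Λ) : I × G × Λ :=
  (x.1, (P x.2.2 x.1)⁻¹ * x.2.1⁻¹ * (P x.2.2 x.1)⁻¹, x.2.2)

/-- The set `G^P` of entries of the sandwich matrix `P`. -/
def reesEntries (P : Λ → I → G) : Set G := {g | ∃ l i, P l i = g}

/-- The sandwich matrix `P` viewed as a matrix over the subgroup `⟨G^P⟩` generated by its
entries; the Rees matrix semigroup over it is the idempotent-generated subsemigroup
`⟨E(S)⟩ = I × ⟨G^P⟩ × Λ` of `M[G;I,Λ;P]` (for normalised `P`). -/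
def reesEntriesMatrix (P : Λ → I → G) : Λ → I → ↥(Subgroup.closure (reesEntries P)) :=
  fun l i => ⟨P l i, Subgroup.subset_closure ⟨l, i, rfl⟩⟩

/-- The map `[θ, ψ, u, v]` between Rees matrix semigroups. -/
def reesMap (θ : G →* H) (ψI : I → J) (ψΛ : Λ → M) (u : I → H) (v : Λ → H) :
    I × G × Λ → J × H × M :=
  fun x => (ψI x.1, u x.1 * θ x.2.1 * v x.2.2, ψΛ x.2.2)

end Rees

/-- The set `A` forms a characteristic subgroup of `G`: it is a subgroup (contains the
identity and is closed under products and inverses) and is invariant under every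
automorphism of `G`. -/
def IsCharacteristicSubgroupSet {G : Type*} [Group G] (A : Set G) : Prop :=
  1 ∈ A ∧ (∀ a ∈ A, ∀ b ∈ A, a * b ∈ A) ∧ (∀ a ∈ A, a⁻¹ ∈ A) ∧
    ∀ θ : G ≃* G, θ '' A = A

/-- Homogeneity of a complete edge-coloured bipartite graph with left set `L`,
right set `R` and colouring function `F`. -/
def IsHomogeneousBipartite {L R C : Type*} (F : L → R → C) : Prop :=
  ∀ (A : Finset L) (B : Finset R) (α : L → L) (β : R → R),
    Set.InjOn α ↑A → Set.InjOn β ↑B →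
    (∀ a ∈ A, ∀ b ∈ B, F (α a) (β b) = F a b) →
    ∃ (α' : Equiv.Perm L) (β' : Equiv.Perm R),
      (∀ a ∈ A, α' a = α a) ∧ (∀ b ∈ B, β' b = β b) ∧
      ∀ (x : L) (y : R), F (α' x) (β' y) = F x y

/-!
An automorphism `Φ` of a normalised Rees matrix semigroup permutes the `𝓡`-classes
`{i} × G × Λ` and the `𝓛`-classes `I × G × {λ}`, say by `σ` and `τ`, and maps idempotents to
idempotents. As `(1_I, P(λ,i), 1_Λ) = (1_I, ε, λ)(i, ε, 1_Λ)` is a product of two idempotents,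
`Φ(1_I, P(λ,i), 1_Λ) = (1_I, P(τλ, σi), 1_Λ)` as soon as `σ 1_I = 1_I` and `τ 1_Λ = 1_Λ`.
Because the first row and column of `P` are trivial, `J × ⟨H⟩ × {1_Λ}` is a completely simple
subsemigroup on which `(j, g, 1_Λ) ↦ (ψ j, g, 1_Λ)` is an isomorphism (dually for
`{1_I} × ⟨H⟩ × M`); by homogeneity it extends to an automorphism, which fixes every
`(1_I, h, 1_Λ)` with `h ∈ H`.
-/

section PermOfKey

variable {S K : Type*} (op : S → S → S) (key : S → K)

-- With `key` the `𝓡`-class, `hkey` describes Green's relation `𝓡` in a completely simple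
-- semigroup, and the lemma says that isomorphisms preserve it.
theorem map_key_eq_iff (hkey : ∀ x y, key x = key y ↔ ∃ z, op x z = y)
    {Φ : S → S} (hΦ : Function.Bijective Φ) (hmul : ∀ x y, Φ (op x y) = op (Φ x) (Φ y))
    (x y : S) : key (Φ x) = key (Φ y) ↔ key x = key y := by
  rw [hkey, hkey]
  constructor
  · rintro ⟨z, hz⟩
    obtain ⟨z, rfl⟩ := hΦ.2 z
    exact ⟨z, hΦ.1 (by rw [hmul, hz])⟩
  · rintro ⟨z, rfl⟩
    exact ⟨Φ z, (hmul x z).symm⟩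

theorem exists_perm_map_key (hkey : ∀ x y, key x = key y ↔ ∃ z, op x z = y)
    (hsurj : Function.Surjective key)
    {Φ : S → S} (hΦ : Function.Bijective Φ) (hmul : ∀ x y, Φ (op x y) = op (Φ x) (Φ y)) :
    ∃ σ : Equiv.Perm K, ∀ x, key (Φ x) = σ (key x) := by
  have hcompat := map_key_eq_iff op key hkey hΦ hmul
  let f : K → K := fun k => key (Φ (Function.surjInv hsurj k))
  have hf : ∀ x, key (Φ x) = f (key x) := fun x =>
    (hcompat _ _).2 (Function.surjInv_eq hsurj _).symm
  have hf_bij : f.Bijective := by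
    refine ⟨fun k k' h => ?_, fun k => ?_⟩
    · simpa only [Function.surjInv_eq] using (hcompat _ _).1 h
    · obtain ⟨x, hx⟩ := hΦ.2 (Function.surjInv hsurj k)
      exact ⟨key x, by rw [← hf, hx, Function.surjInv_eq hsurj]⟩
  exact ⟨Equiv.ofBijective f hf_bij, hf⟩

end PermOfKey

section ReesMatrix

variable {G I Λ : Type*} [Group G] (P : Λ → I → G)

theorem fst_eq_iff_exists_reesMul {iI : I} (hcol : ∀ m : Λ, P m iI = 1)
    (x y : I × G × Λ) : x.1 = y.1 ↔ ∃ z, reesMul P x z = y := by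
  refine ⟨fun h => ⟨(iI, x.2.1⁻¹ * y.2.1, y.2.2), ?_⟩, fun ⟨z, hz⟩ => hz ▸ rfl⟩
  simp [reesMul, hcol, h]

theorem snd_snd_eq_iff_exists_reesMul {lL : Λ} (hrow : ∀ j : I, P lL j = 1)
    (x y : I × G × Λ) : x.2.2 = y.2.2 ↔ ∃ z, reesMul P z x = y := by
  refine ⟨fun h => ⟨(y.1, y.2.1 * x.2.1⁻¹, lL), ?_⟩, fun ⟨z, hz⟩ => hz ▸ rfl⟩
  simp [reesMul, hrow, h]

theorem reesMul_self_eq_self_iff (x : I × G × Λ) :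
    reesMul P x x = x ↔ x.2.1 = (P x.2.2 x.1)⁻¹ := by
  simp [reesMul, Prod.ext_iff, eq_inv_iff_mul_eq_one]

section Automorphism

variable {iI : I} {lL : Λ} {Φ : I × G × Λ → I × G × Λ}

theorem exists_perms_of_reesMul_aut (hrow : ∀ j : I, P lL j = 1)
    (hcol : ∀ m : Λ, P m iI = 1) (hΦ : Function.Bijective Φ)
    (hmul : ∀ x y, Φ (reesMul P x y) = reesMul P (Φ x) (Φ y)) :
    ∃ (σ : Equiv.Perm I) (τ : Equiv.Perm Λ),
      (∀ x, (Φ x).1 = σ x.1) ∧ ∀ x, (Φ x).2.2 = τ x.2.2 := by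
  obtain ⟨σ, hσ⟩ := exists_perm_map_key (reesMul P) Prod.fst
    (fst_eq_iff_exists_reesMul P hcol) (fun i => ⟨(i, 1, lL), rfl⟩) hΦ hmul
  obtain ⟨τ, hτ⟩ := exists_perm_map_key (fun x y => reesMul P y x) (fun x => x.2.2)
    (snd_snd_eq_iff_exists_reesMul P hrow) (fun l => ⟨(iI, 1, l), rfl⟩) hΦ
    (fun x y => hmul y x)
  exact ⟨σ, τ, hσ, hτ⟩

theorem reesMul_aut_apply_sandwich (hrow : ∀ j : I, P lL j = 1)
    (hcol : ∀ m : Λ, P m iI = 1) (hmul : ∀ x y, Φ (reesMul P x y) = reesMul P (Φ x) (Φ y))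
    {σ : Equiv.Perm I} {τ : Equiv.Perm Λ}
    (hσ : ∀ x, (Φ x).1 = σ x.1) (hτ : ∀ x, (Φ x).2.2 = τ x.2.2)
    (hσ₀ : σ iI = iI) (hτ₀ : τ lL = lL) (l : Λ) (i : I) :
    (Φ (iI, P l i, lL)).2.1 = P (τ l) (σ i) := by
  have hidem : ∀ x, reesMul P x x = x → (Φ x).2.1 = (P (τ x.2.2) (σ x.1))⁻¹ := by
    intro x hx
    rw [← hσ, ← hτ, ← reesMul_self_eq_self_iff, ← hmul, hx]
  have hfactor : (iI, P l i, lL) = reesMul P (iI, 1, l) (i, 1, lL) := by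
    simp [reesMul]
  rw [hfactor, hmul]
  simp only [reesMul]
  rw [hidem _ (by simp [reesMul, hcol]), hidem _ (by simp [reesMul, hrow]), hσ, hτ]
  simp [hσ₀, hτ₀, hcol, hrow]

theorem exists_perms_of_reesMul_aut_fixing (hrow : ∀ j : I, P lL j = 1)
    (hcol : ∀ m : Λ, P m iI = 1) (hΦ : Function.Bijective Φ)
    (hmul : ∀ x y, Φ (reesMul P x y) = reesMul P (Φ x) (Φ y))
    (K : Subgroup G) (hfix : ∀ g ∈ K, Φ (iI, g, lL) = (iI, g, lL)) :
    ∃ (σ : Equiv.Perm I) (τ : Equiv.Perm Λ),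
      (∀ x, (Φ x).1 = σ x.1) ∧ (∀ x, (Φ x).2.2 = τ x.2.2) ∧ σ iI = iI ∧ τ lL = lL ∧
      ∀ l i, P l i ∈ K → P (τ l) (σ i) = P l i := by
  obtain ⟨σ, τ, hσ, hτ⟩ := exists_perms_of_reesMul_aut P hrow hcol hΦ hmul
  have hσ₀ : σ iI = iI := by rw [← hσ (iI, 1, lL), hfix 1 (one_mem K)]
  have hτ₀ : τ lL = lL := by rw [← hτ (iI, 1, lL), hfix 1 (one_mem K)]
  refine ⟨σ, τ, hσ, hτ, hσ₀, hτ₀, fun l i hli => ?_⟩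
  rw [← reesMul_aut_apply_sandwich P hrow hcol hmul hσ hτ hσ₀ hτ₀, hfix _ hli]

end Automorphism

theorem setOf_cSClosure_prod [DecidableEq G] (A : Finset I) (B : Finset Λ) (Hs : Finset G)
    (hP : ∀ l ∈ B, ∀ i ∈ A, P l i = 1) :
    {s | CSClosure (reesMul P) (reesInv P) ↑(A ×ˢ insert 1 Hs ×ˢ B) s} =
      (A : Set I) ×ˢ (Subgroup.closure (Hs : Set G) : Set G) ×ˢ (B : Set Λ) := by
  ext x
  constructor
  · intro h
    induction h with
    | base hx =>
      simp only [Finset.coe_product, Finset.coe_insert, Set.mem_prod, Set.mem_insert_iff] at hx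
      obtain ⟨hi, hg | hg, hl⟩ := hx
      · exact ⟨hi, hg ▸ one_mem _, hl⟩
      · exact ⟨hi, Subgroup.subset_closure hg, hl⟩
    | mul _ _ ihx ihy =>
      refine ⟨ihx.1, ?_, ihy.2.2⟩
      simpa [reesMul, hP _ ihx.2.2 _ ihy.1] using mul_mem ihx.2.1 ihy.2.1
    | inv _ ihx =>
      refine ⟨ihx.1, ?_, ihx.2.2⟩
      simpa [reesInv, hP _ ihx.2.2 _ ihx.1] using inv_mem ihx.2.1
  · obtain ⟨i, g, l⟩ := x
    rintro ⟨hi : i ∈ A, hg : g ∈ Subgroup.closure (Hs : Set G), hl : l ∈ B⟩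
    have hbase : ∀ g ∈ insert 1 Hs, CSClosure (reesMul P) (reesInv P)
        ↑(A ×ˢ insert 1 Hs ×ˢ B) (i, g, l) := fun g hg =>
      CSClosure.base (by simp only [Finset.coe_product, Set.mem_prod]; exact ⟨hi, hg, hl⟩)
    induction hg using Subgroup.closure_induction with
    | mem g hg => exact hbase g (Finset.mem_insert_of_mem hg)
    | one => exact hbase 1 (Finset.mem_insert_self _ _)
    | mul a b _ _ ha hb => simpa [reesMul, hP l hl i hi] using CSClosure.mul ha hb
    | inv a _ ha => simpa [reesInv, hP l hl i hi] using CSClosure.inv ha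

theorem exists_reesMul_aut_extending (hhom : IsCSHomogeneous (reesMul P) (reesInv P))
    (A : Finset I) (B : Finset Λ) (Hs : Finset G) {α : I → I} {β : Λ → Λ}
    (hα : Set.BijOn α A A) (hβ : Set.BijOn β B B) (hP : ∀ l ∈ B, ∀ i ∈ A, P l i = 1) :
    ∃ Φ : I × G × Λ → I × G × Λ, Function.Bijective Φ ∧
      (∀ x y, Φ (reesMul P x y) = reesMul P (Φ x) (Φ y)) ∧
      ∀ x ∈ (A : Set I) ×ˢ (Subgroup.closure (Hs : Set G) : Set G) ×ˢ (B : Set Λ),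
        Φ x = (α x.1, x.2.1, β x.2.2) := by
  classical
  have hC := setOf_cSClosure_prod P A B Hs hP
  obtain ⟨Φ, hΦ, hmul, hext⟩ := hhom _ _ (Prod.map α (Prod.map id β))
    (by rw [hC]; exact hα.prodMap (Set.bijOn_id _ |>.prodMap hβ))
    (by
      intro x y hx hy
      rw [← Set.mem_ofPred_eq (p := CSClosure _ _ _), hC] at hx hy
      simp [reesMul, hP _ (hβ.mapsTo hx.2.2) _ (hα.mapsTo hy.1), hP _ hx.2.2 _ hy.1])
  refine ⟨Φ, hΦ, hmul, fun x hx => hext x ?_⟩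
  rwa [← hC] at hx

end ReesMatrix

theorem rees_homogeneous_extend_column_bijection_general {G I Λ : Type*} [Group G]
    (P : Λ → I → G) (iI : I) (lL : Λ)
    (hrow : ∀ j : I, P lL j = 1) (hcol : ∀ m : Λ, P m iI = 1)
    (hhom : IsCSHomogeneous (reesMul P) (reesInv P)) :
    (∀ Hs : Finset G, (Hs : Set G) ⊆ reesEntries P →
      ∀ J : Finset I, iI ∈ J →
      ∀ ψ : I → I, Set.BijOn ψ (J : Set I) (J : Set I) → ψ iI = iI →
        ∃ (σ : Equiv.Perm I) (τ : Equiv.Perm Λ),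
          (∀ j ∈ J, σ j = ψ j) ∧ τ lL = lL ∧
          ∀ (l : Λ) (i : I), P l i ∈ Hs → P (τ l) (σ i) = P l i) ∧
    (∀ Hs : Finset G, (Hs : Set G) ⊆ reesEntries P →
      ∀ Ms : Finset Λ, lL ∈ Ms →
      ∀ ψ : Λ → Λ, Set.BijOn ψ (Ms : Set Λ) (Ms : Set Λ) → ψ lL = lL →
        ∃ (τ : Equiv.Perm Λ) (σ : Equiv.Perm I),
          (∀ m ∈ Ms, τ m = ψ m) ∧ σ iI = iI ∧
          ∀ (l : Λ) (i : I), P l i ∈ Hs → P (τ l) (σ i) = P l i) := by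
  refine ⟨fun Hs _ J hJ ψ hψ hψ₀ => ?_, fun Hs _ Ms hMs ψ hψ hψ₀ => ?_⟩
  · obtain ⟨Φ, hΦ, hmul, hext⟩ := exists_reesMul_aut_extending P hhom J {lL} Hs hψ
      (Set.bijOn_id _) (by simp [hrow])
    obtain ⟨σ, τ, hσ, -, -, hτ₀, hP⟩ :=
      exists_perms_of_reesMul_aut_fixing P hrow hcol hΦ hmul
      (Subgroup.closure Hs) fun g hg => by
        rw [hext (iI, g, lL) ⟨hJ, hg, Finset.mem_singleton_self lL⟩, hψ₀]; rfl
    refine ⟨σ, τ, fun j hj => ?_, hτ₀, fun l i h => hP l i (Subgroup.subset_closure h)⟩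
    rw [← hσ (j, 1, lL), hext (j, 1, lL) ⟨hj, one_mem _, Finset.mem_singleton_self lL⟩]
  · obtain ⟨Φ, hΦ, hmul, hext⟩ := exists_reesMul_aut_extending P hhom {iI} Ms Hs
      (Set.bijOn_id _) hψ (by simp [hcol])
    obtain ⟨σ, τ, -, hτ, hσ₀, -, hP⟩ :=
      exists_perms_of_reesMul_aut_fixing P hrow hcol hΦ hmul
      (Subgroup.closure Hs) fun g hg => by
        rw [hext (iI, g, lL) ⟨Finset.mem_singleton_self iI, hg, hMs⟩, hψ₀]; rfl
    refine ⟨τ, σ, fun m hm => ?_, hσ₀, fun l i h => hP l i (Subgroup.subset_closure h)⟩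
    rw [← hτ (iI, 1, m), hext (iI, 1, m) ⟨Finset.mem_singleton_self iI, one_mem _, hm⟩]

/-- Let `S = M[G;I,Λ;P]` be a normalised Rees matrix semigroup (countable
group, countable index sets) which is homogeneous as a completely simple semigroup.
For every finite subset `H ⊆ G^P`, every finite `J ⊆ I` containing `1_I` and every
bijection `ψ` of `J` fixing `1_I`, there are bijections `σ` of `I` extending `ψ` and `τ`
of `Λ` fixing `1_Λ` with `P(τ(λ), σ(i)) = P(λ,i)` whenever `P(λ,i) ∈ H`; dually for
finite subsets of `Λ`. -/
theorem rees_homogeneous_extend_column_bijection {G I Λ : Type*} [Group G] [Countable G]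
    [Countable I] [Countable Λ]
    (P : Λ → I → G) (iI : I) (lL : Λ)
    (hrow : ∀ j : I, P lL j = 1) (hcol : ∀ m : Λ, P m iI = 1)
    (hhom : IsCSHomogeneous (reesMul P) (reesInv P)) :
    (∀ Hs : Finset G, (Hs : Set G) ⊆ reesEntries P →
      ∀ J : Finset I, iI ∈ J →
      ∀ ψ : I → I, Set.BijOn ψ (J : Set I) (J : Set I) → ψ iI = iI →
        ∃ (σ : Equiv.Perm I) (τ : Equiv.Perm Λ),
          (∀ j ∈ J, σ j = ψ j) ∧ τ lL = lL ∧
          ∀ (l : Λ) (i : I), P l i ∈ Hs → P (τ l) (σ i) = P l i) ∧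
    (∀ Hs : Finset G, (Hs : Set G) ⊆ reesEntries P →
      ∀ Ms : Finset Λ, lL ∈ Ms →
      ∀ ψ : Λ → Λ, Set.BijOn ψ (Ms : Set Λ) (Ms : Set Λ) → ψ lL = lL →
        ∃ (τ : Equiv.Perm Λ) (σ : Equiv.Perm I),
          (∀ m ∈ Ms, τ m = ψ m) ∧ σ iI = iI ∧
          ∀ (l : Λ) (i : I), P l i ∈ Hs → P (τ l) (σ i) = P l i) :=
  rees_homogeneous_extend_column_bijection_general P iI lL hrow hcol hhom
end

section
/- Let S = M[G;I,Λ;P] be a normalised Rees matrix semigroup over a countable group G with countable index sets I, Λ, which is homogeneous as a completely simple semigroup, and suppose the set of entries G^P is infinite. Then the induced edge-coloured bipartite graph Γ(S) — with left set Λ' = Λ∖{1_Λ}, right set I' = I∖{1_I}, and edge (λ,i) coloured by P(λ,i) — has colour set exactly G^P (every element of G^P occurs as P(λ,i) for some λ ∈ Λ', i ∈ I') and is G^P-generic. -/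
/-!
Homogeneity lets one relabel rows. Column `x` of `M[G;I,Λ;P]` is a rectangular group
`G × Λ`, so any injective relabelling `σ` of finitely many rows is an isomorphism between
finitely generated subsemigroups of two columns; the automorphism extending it carries every
column `y` to a column `j` with `P(l,j) = P(σ l, y) * h` for a constant `h`. With the
normalisation this makes the patterns `(P(l,j))_{l ∈ L}` realised by columns a subgroup of
`Λ → G`; the quotient of two relabellings that differ only at one row `l₀` is an entry at `l₀`
and `1` elsewhere, so every `G^P`-valued pattern is realised. Each entry already occurs in each
non-distinguished row, which makes `I'` infinite. Rows and columns are exchanged by the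
anti-isomorphism with `M[Gᵐᵒᵖ;Λ,I;Pᵀ]`, which is again homogeneous.
-/

theorem Set.InjOn.update {α β : Type*} [DecidableEq α] {f : α → β} {s : Set α}
    (hf : Set.InjOn f s) (a : α) {b : β} (hb : b ∉ f '' s) :
    Set.InjOn (Function.update f a b) s := by
  intro x hx y hy hxy
  by_cases hxa : x = a <;> by_cases hya : y = a
  · rw [hxa, hya]
  · rw [hxa, Function.update_self, Function.update_of_ne hya] at hxy
    exact absurd ⟨y, hy, hxy.symm⟩ hb
  · rw [hya, Function.update_self, Function.update_of_ne hxa] at hxy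
    exact absurd ⟨x, hx, hxy⟩ hb
  · rw [Function.update_of_ne hxa, Function.update_of_ne hya] at hxy
    exact hf hx hy hxy

theorem mulIndicator_mem_of_mulSingle_mem {ι M S : Type*} [DecidableEq ι] [Monoid M]
    [SetLike S (ι → M)] [SubmonoidClass S (ι → M)] {K : S} {s : Finset ι} {v : ι → M}
    (h : ∀ i ∈ s, Pi.mulSingle i (v i) ∈ K) : (s : Set ι).mulIndicator v ∈ K := by
  induction s using Finset.induction_on with
  | empty => rw [Finset.coe_empty, Set.mulIndicator_empty]; exact one_mem K
  | insert a s ha ih =>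
    have hsplit : (↑(insert a s) : Set ι).mulIndicator v =
        (s : Set ι).mulIndicator v * Pi.mulSingle a (v a) := by
      funext i
      by_cases hi : i = a
      · subst hi; simp [ha]
      · simp [Set.mulIndicator_apply, hi]
    rw [hsplit]
    exact mul_mem (ih fun i hi => h i (Finset.mem_insert_of_mem hi))
      (h a (Finset.mem_insert_self a s))

section AntiEquiv

variable {S T : Type*} {op : S → S → S} {star : S → S} {op' : T → T → T} {star' : T → T}

theorem Equiv.symm_apply_op_of_anti (e : S ≃ T) (hop : ∀ x y, e (op x y) = op' (e y) (e x))
    (a b : T) : e.symm (op' a b) = op (e.symm b) (e.symm a) :=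
  e.injective (by simp [hop])

theorem CSClosure.map_anti (e : S → T) (hop : ∀ x y, e (op x y) = op' (e y) (e x))
    (hstar : ∀ x, e (star x) = star' (e x)) {X : Set S} {s : S}
    (hs : CSClosure op star X s) : CSClosure op' star' (e '' X) (e s) := by
  induction hs with
  | base hx => exact .base ⟨_, hx, rfl⟩
  | mul _ _ ihx ihy => rw [hop]; exact .mul ihy ihx
  | inv _ ih => rw [hstar]; exact .inv ih

theorem csClosure_symm_image_iff (e : S ≃ T) (hop : ∀ x y, e (op x y) = op' (e y) (e x))
    (hstar : ∀ x, e (star x) = star' (e x)) {X : Set T} {s : S} :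
    CSClosure op star (e.symm '' X) s ↔ CSClosure op' star' X (e s) := by
  have hstar' : ∀ a, e.symm (star' a) = star (e.symm a) := fun a =>
    e.injective (by simp [hstar])
  constructor
  · intro hs
    simpa using hs.map_anti e hop hstar
  · intro hs
    simpa using hs.map_anti e.symm (e.symm_apply_op_of_anti hop) hstar'

theorem IsCSHomogeneous.of_antiEquiv (e : S ≃ T) (hop : ∀ x y, e (op x y) = op' (e y) (e x))
    (hstar : ∀ x, e (star x) = star' (e x)) (hS : IsCSHomogeneous op star) :
    IsCSHomogeneous op' star' := by
  have hop' := e.symm_apply_op_of_anti hop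
  intro X Y φ hφ hφmul
  have hcl : ∀ (Z : Finset T) (s : S), CSClosure op star ↑(Z.map e.symm.toEmbedding) s ↔
      CSClosure op' star' ↑Z (e s) := fun Z s => by
    rw [Finset.coe_map]; exact csClosure_symm_image_iff e hop hstar
  have hbij : Set.BijOn (e.symm ∘ φ ∘ e)
      {s | CSClosure op star ↑(X.map e.symm.toEmbedding) s}
      {s | CSClosure op star ↑(Y.map e.symm.toEmbedding) s} := by
    refine ⟨fun s hs => ?_, fun s hs t ht hst => ?_, fun s hs => ?_⟩
    · exact (hcl Y _).2 (by simpa using hφ.mapsTo ((hcl X s).1 hs))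
    · exact e.injective (hφ.injOn ((hcl X s).1 hs) ((hcl X t).1 ht) (by simpa using hst))
    · obtain ⟨t, ht, hts⟩ := hφ.surjOn ((hcl Y s).1 hs)
      exact ⟨e.symm t, (hcl X _).2 (by simpa using ht), by simp [hts]⟩
  have hmul : ∀ a b, CSClosure op star ↑(X.map e.symm.toEmbedding) a →
      CSClosure op star ↑(X.map e.symm.toEmbedding) b →
      (e.symm ∘ φ ∘ e) (op a b) = op ((e.symm ∘ φ ∘ e) a) ((e.symm ∘ φ ∘ e) b) := by
    intro a b ha hb
    rw [hcl] at ha hb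
    simp [hop, hφmul _ _ hb ha, hop']
  obtain ⟨Φ, hΦ, hΦmul, hΦφ⟩ := hS _ _ _ hbij hmul
  refine ⟨e ∘ Φ ∘ e.symm, e.bijective.comp (hΦ.comp e.symm.bijective), fun a b => ?_,
    fun t ht => ?_⟩
  · simp [hop', hΦmul, hop]
  · simp [hΦφ (e.symm t) ((hcl X _).2 (by simpa using ht))]

end AntiEquiv

section Column

variable {G I Λ : Type*} [Group G] (P : Λ → I → G)

/-- Column `x` of `M[G;I,Λ;P]` is a copy of the rectangular group `G × Λ` (right zero band
`Λ`), with `(a, l)` sitting at `(x, a * P(l,x)⁻¹, l)`. -/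
def colElt (x : I) (a : G) (l : Λ) : I × G × Λ := (x, a * (P l x)⁻¹, l)

@[simp] theorem reesMul_colElt (x : I) (a b : G) (l m : Λ) :
    reesMul P (colElt P x a l) (colElt P x b m) = colElt P x (a * b) m := by
  simp [reesMul, colElt, mul_assoc]

@[simp] theorem reesInv_colElt (x : I) (a : G) (l : Λ) :
    reesInv P (colElt P x a l) = colElt P x a⁻¹ l := by
  simp [reesInv, colElt]

theorem colElt_inj {x : I} {a b : G} {l m : Λ} :
    colElt P x a l = colElt P x b m ↔ a = b ∧ l = m := by
  constructor
  · intro h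
    simp only [colElt, Prod.mk.injEq, true_and] at h
    obtain ⟨h, rfl⟩ := h
    exact ⟨mul_right_cancel h, rfl⟩
  · rintro ⟨rfl, rfl⟩; rfl

noncomputable def colGens (x : I) (m : Λ) (T : Finset G) (L : Finset Λ) :
    Finset (I × G × Λ) := by
  classical exact T.image (fun t => colElt P x t m) ∪ L.image (colElt P x 1)

theorem csClosure_colGens_iff {x : I} {m : Λ} {T : Finset G} {L : Finset Λ} (hm : m ∈ L)
    {s : I × G × Λ} : CSClosure (reesMul P) (reesInv P) ↑(colGens P x m T L) s ↔
      ∃ a ∈ Subgroup.closure (T : Set G), ∃ l ∈ L, colElt P x a l = s := by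
  classical
  have hgen : ∀ s ∈ colGens P x m T L,
      ∃ a ∈ Subgroup.closure (T : Set G), ∃ l ∈ L, colElt P x a l = s := by
    simp only [colGens, Finset.mem_union, Finset.mem_image]
    rintro s (⟨t, ht, rfl⟩ | ⟨l, hl, rfl⟩)
    · exact ⟨t, Subgroup.subset_closure ht, m, hm, rfl⟩
    · exact ⟨1, one_mem _, l, hl, rfl⟩
  constructor
  · intro hs
    induction hs with
    | base h => exact hgen _ h
    | mul _ _ ih₁ ih₂ =>
      obtain ⟨a, ha, -, -, rfl⟩ := ih₁
      obtain ⟨b, hb, n, hn, rfl⟩ := ih₂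
      exact ⟨a * b, mul_mem ha hb, n, hn, (reesMul_colElt P x a b _ n).symm⟩
    | inv _ ih =>
      obtain ⟨a, ha, l, hl, rfl⟩ := ih
      exact ⟨a⁻¹, inv_mem ha, l, hl, (reesInv_colElt P x a l).symm⟩
  · rintro ⟨a, ha, l, hl, rfl⟩
    have hbase : ∀ {s}, s ∈ colGens P x m T L → CSClosure (reesMul P) (reesInv P)
        ↑(colGens P x m T L) s := fun h => .base h
    have hgenT : ∀ t ∈ T, colElt P x t m ∈ colGens P x m T L := fun t ht => by
      unfold colGens; exact Finset.mem_union_left _ (Finset.mem_image_of_mem _ ht)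
    have hgenL : ∀ l ∈ L, colElt P x 1 l ∈ colGens P x m T L := fun l hl => by
      unfold colGens; exact Finset.mem_union_right _ (Finset.mem_image_of_mem _ hl)
    have hbaseRow : ∀ a ∈ Subgroup.closure (T : Set G),
        CSClosure (reesMul P) (reesInv P) ↑(colGens P x m T L) (colElt P x a m) := by
      intro a ha
      induction ha using Subgroup.closure_induction with
      | mem t ht => exact hbase (hgenT t ht)
      | one => exact hbase (hgenL m hm)
      | mul a b _ _ iha ihb => simpa using iha.mul ihb
      | inv a _ iha => simpa using iha.inv
    simpa using (hbaseRow a ha).mul (hbase (hgenL l hl))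

def colRelabel (x x' : I) (σ : Λ → Λ) (s : I × G × Λ) : I × G × Λ :=
  colElt P x (s.2.1 * P s.2.2 x') (σ s.2.2)

@[simp] theorem colRelabel_colElt (x x' : I) (σ : Λ → Λ) (a : G) (l : Λ) :
    colRelabel P x x' σ (colElt P x' a l) = colElt P x a (σ l) := by
  simp [colRelabel, colElt]

theorem bijOn_colRelabel {x x' : I} {σ : Λ → Λ} {m : Λ} {T : Finset G} {L : Finset Λ}
    [DecidableEq Λ] (hm : m ∈ L) (hσ : Set.InjOn σ L) :
    Set.BijOn (colRelabel P x x' σ)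
      {s | CSClosure (reesMul P) (reesInv P) ↑(colGens P x' m T L) s}
      {s | CSClosure (reesMul P) (reesInv P) ↑(colGens P x (σ m) T (L.image σ)) s} := by
  have hdom := fun s => csClosure_colGens_iff P (x := x') (T := T) hm (s := s)
  have hcod := fun s => csClosure_colGens_iff P (x := x) (T := T)
    (Finset.mem_image_of_mem σ hm) (s := s)
  refine ⟨fun s hs => ?_, fun s hs t ht hst => ?_, fun s hs => ?_⟩
  · obtain ⟨a, ha, l, hl, rfl⟩ := (hdom s).1 hs
    exact (hcod _).2 ⟨a, ha, σ l, Finset.mem_image_of_mem σ hl, (colRelabel_colElt ..).symm⟩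
  · obtain ⟨a, -, l, hl, rfl⟩ := (hdom s).1 hs
    obtain ⟨b, -, n, hn, rfl⟩ := (hdom t).1 ht
    rw [colRelabel_colElt, colRelabel_colElt, colElt_inj] at hst
    rw [hst.1, hσ hl hn hst.2]
  · obtain ⟨a, ha, l', hl', rfl⟩ := (hcod s).1 hs
    obtain ⟨l, hl, rfl⟩ := Finset.mem_image.1 hl'
    exact ⟨colElt P x' a l, (hdom _).2 ⟨a, ha, l, hl, rfl⟩, colRelabel_colElt ..⟩

theorem colRelabel_reesMul {x x' : I} {σ : Λ → Λ} {m : Λ} {T : Finset G} {L : Finset Λ}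
    (hm : m ∈ L) {s t : I × G × Λ}
    (hs : CSClosure (reesMul P) (reesInv P) ↑(colGens P x' m T L) s)
    (ht : CSClosure (reesMul P) (reesInv P) ↑(colGens P x' m T L) t) :
    colRelabel P x x' σ (reesMul P s t) =
      reesMul P (colRelabel P x x' σ s) (colRelabel P x x' σ t) := by
  obtain ⟨a, -, l, -, rfl⟩ := (csClosure_colGens_iff P hm).1 hs
  obtain ⟨b, -, n, -, rfl⟩ := (csClosure_colGens_iff P hm).1 ht
  simp only [reesMul_colElt, colRelabel_colElt]

end Column

section Relabel

variable {G I Λ : Type*} [Group G] {P : Λ → I → G}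

/-- Extend the isomorphism `colRelabel` between two column subsemigroups to an automorphism `Φ`;
the `Φ`-preimage of an element of column `y` lies in a column `j` that carries column `y`
relabelled by `σ`, because `Φ` respects the products `(x', 1, l) * Φ⁻¹(y, _, σ m)`. -/
theorem IsCSHomogeneous.exists_col_relabel (hhom : IsCSHomogeneous (reesMul P) (reesInv P))
    (x x' y : I) (L : Finset Λ) {σ : Λ → Λ} (hσ : Set.InjOn σ L) :
    ∃ j h, ∀ l ∈ L, P l j = P l x' * (P (σ l) x)⁻¹ * P (σ l) y * h := by
  classical
  obtain rfl | ⟨m, hm⟩ := L.eq_empty_or_nonempty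
  · exact ⟨y, 1, by simp⟩
  set T := L.image fun l => (P (σ l) x)⁻¹ * P (σ l) y
  have hdom := fun s => csClosure_colGens_iff P (x := x') (T := T) hm (s := s)
  obtain ⟨Φ, hΦ, hΦmul, hΦφ⟩ := hhom _ _ _ (bijOn_colRelabel P (x := x) hm hσ)
    fun s t => colRelabel_reesMul P hm
  obtain ⟨⟨j, g, μ⟩, he⟩ := hΦ.2 (y, (P (σ m) x)⁻¹, σ m)
  refine ⟨j, (P m x')⁻¹ * g⁻¹, fun l hl => ?_⟩
  set q := (P (σ l) x)⁻¹ * P (σ l) y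
  have hq : q ∈ Subgroup.closure (T : Set G) :=
    Subgroup.subset_closure (Finset.mem_image_of_mem _ hl)
  have hprod : reesMul P (colElt P x' 1 l) (j, g, μ) = colElt P x' q m := by
    apply hΦ.1
    rw [hΦmul, hΦφ _ ((hdom _).2 ⟨1, one_mem _, l, hl, rfl⟩),
      hΦφ _ ((hdom _).2 ⟨q, hq, m, hm, rfl⟩), colRelabel_colElt, colRelabel_colElt, he]
    simp [reesMul, colElt, q, mul_assoc]
  have hmid : (P l x')⁻¹ * P l j * g = q * (P m x')⁻¹ := by
    simpa [reesMul, colElt, mul_assoc] using congrArg (fun s => s.2.1) hprod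
  calc P l j = P l x' * ((P l x')⁻¹ * P l j * g) * g⁻¹ := by group
    _ = _ := by rw [hmid]; simp only [q, mul_assoc]

end Relabel

section Normalised

variable {G I Λ : Type*} [Group G] {P : Λ → I → G} {iI : I} {lL : Λ}

theorem exists_col_relabel_mul (hcol : ∀ m : Λ, P m iI = 1)
    (hhom : IsCSHomogeneous (reesMul P) (reesInv P)) (y : I) (L : Finset Λ) {σ : Λ → Λ}
    (hσ : Set.InjOn σ L) : ∃ j h, ∀ l ∈ L, P l j = P (σ l) y * h := by
  obtain ⟨j, h, hj⟩ := hhom.exists_col_relabel iI iI y L hσ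
  exact ⟨j, h, fun l hl => by simpa [hcol] using hj l hl⟩

theorem exists_col_inv_mul (hrow : ∀ j : I, P lL j = 1) (hcol : ∀ m : Λ, P m iI = 1)
    (hhom : IsCSHomogeneous (reesMul P) (reesInv P)) (x y : I) (L : Finset Λ) :
    ∃ j, ∀ l ∈ L, P l j = (P l x)⁻¹ * P l y := by
  classical
  obtain ⟨j, h, hj⟩ := hhom.exists_col_relabel x iI y (insert lL L) (Set.injOn_id _)
  have h1 : h = 1 := by simpa [hrow] using (hj lL (Finset.mem_insert_self lL L)).symm
  exact ⟨j, fun l hl => by simpa [hcol, h1] using hj l (Finset.mem_insert_of_mem hl)⟩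

def colPatterns (hrow : ∀ j : I, P lL j = 1) (hcol : ∀ m : Λ, P m iI = 1)
    (hhom : IsCSHomogeneous (reesMul P) (reesInv P)) (L : Finset Λ) : Subgroup (Λ → G) where
  carrier := {v | ∃ j, ∀ l ∈ L, P l j = v l}
  one_mem' := ⟨iI, fun l _ => hcol l⟩
  mul_mem' := by
    rintro v w ⟨x, hx⟩ ⟨y, hy⟩
    obtain ⟨x', hx'⟩ := exists_col_inv_mul hrow hcol hhom x iI L
    obtain ⟨j, hj⟩ := exists_col_inv_mul hrow hcol hhom x' y L
    exact ⟨j, fun l hl => by simp [hj l hl, hx' l hl, hx l hl, hy l hl, hcol]⟩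
  inv_mem' := by
    rintro v ⟨x, hx⟩
    obtain ⟨j, hj⟩ := exists_col_inv_mul hrow hcol hhom x iI L
    exact ⟨j, fun l hl => by simp [hj l hl, hx l hl, hcol]⟩

theorem exists_col_eq_of_mem_reesEntries (hrow : ∀ j : I, P lL j = 1)
    (hcol : ∀ m : Λ, P m iI = 1) (hhom : IsCSHomogeneous (reesMul P) (reesInv P)) {μ : Λ}
    (hμ : μ ≠ lL) {d : G} (hd : d ∈ reesEntries P) : ∃ j, P μ j = d := by
  classical
  obtain ⟨ν, y, rfl⟩ := hd
  by_cases hν : ν = lL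
  · exact ⟨iI, by rw [hcol, hν, hrow]⟩
  obtain ⟨j, h, hj⟩ := exists_col_relabel_mul hcol hhom y {lL, μ}
    (Equiv.swap μ ν).injective.injOn
  have h1 : h = 1 := by
    simpa [Equiv.swap_apply_of_ne_of_ne hμ.symm (Ne.symm hν), hrow, eq_comm]
      using hj lL (by simp)
  exact ⟨j, by simpa [h1] using hj μ (by simp)⟩

theorem infinite_ne_col (hrow : ∀ j : I, P lL j = 1) (hcol : ∀ m : Λ, P m iI = 1)
    (hhom : IsCSHomogeneous (reesMul P) (reesInv P)) (hinf : (reesEntries P).Infinite) :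
    {i | i ≠ iI}.Infinite := by
  obtain ⟨_, ⟨μ, i, rfl⟩, hne⟩ := (hinf.sdiff (Set.finite_singleton 1)).nonempty
  have hμ : μ ≠ lL := by rintro rfl; exact hne (hrow i)
  refine Set.Infinite.of_image (P μ) ((hinf.sdiff (Set.finite_singleton 1)).mono ?_)
  rintro d ⟨hd, hd1⟩
  obtain ⟨j, hj⟩ := exists_col_eq_of_mem_reesEntries hrow hcol hhom hμ hd
  exact ⟨j, fun h => hd1 (by rw [← hj, h, hcol]; rfl), hj⟩

/-- Relabel column `y` twice, moving `ν` resp. `lL` to row `l₀` and all other rows of `L`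
(and `lL`) to the same fresh rows; row `lL` shows that both relabellings have the same right
factor, so their quotient is `P(ν,y)` at `l₀` and `1` elsewhere. -/
theorem mulSingle_mem_colPatterns [DecidableEq Λ] (hrow : ∀ j : I, P lL j = 1)
    (hcol : ∀ m : Λ, P m iI = 1) (hhom : IsCSHomogeneous (reesMul P) (reesInv P))
    (hΛ : {l | l ≠ lL}.Infinite) (L : Finset Λ) {l₀ : Λ} (hl₀ : l₀ ≠ lL) {d : G}
    (hd : d ∈ reesEntries P) :
    Pi.mulSingle l₀ d ∈ colPatterns hrow hcol hhom L := by
  obtain ⟨ν, y, rfl⟩ := hd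
  set L' := insert lL L
  have : Nonempty Λ := ⟨lL⟩
  obtain ⟨τ, hτ, hτinj⟩ := (L' : Set Λ).toFinite.exists_injOn_of_encard_le
    (t := {l | l ≠ lL} \ {ν}) (by simp [(hΛ.sdiff (Set.finite_singleton ν)).encard_eq])
  have hfresh : ∀ {b}, b = lL ∨ b = ν → b ∉ τ '' L' := by
    rintro b hb ⟨l, hl, rfl⟩
    have := hτ hl
    simp only [Set.mem_preimage, Set.mem_sdiff, Set.mem_singleton_iff] at this
    tauto
  obtain ⟨jA, hA, hjA⟩ :=
    exists_col_relabel_mul hcol hhom y L' (hτinj.update l₀ (hfresh (.inr rfl)))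
  obtain ⟨jB, hB, hjB⟩ :=
    exists_col_relabel_mul hcol hhom y L' (hτinj.update l₀ (hfresh (.inl rfl)))
  have hAB : hA = hB := by
    have hlL : lL ∈ L' := Finset.mem_insert_self lL L
    have := (hjA lL hlL).symm.trans ((hrow jA).trans ((hrow jB).symm.trans (hjB lL hlL)))
    rw [Function.update_of_ne hl₀.symm, Function.update_of_ne hl₀.symm] at this
    exact mul_left_cancel this
  obtain ⟨j, hj⟩ := (colPatterns hrow hcol hhom L).mul_mem (x := fun l => P l jA)
    ⟨jA, fun _ _ => rfl⟩ ((colPatterns hrow hcol hhom L).inv_mem ⟨jB, fun _ _ => rfl⟩)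
  refine ⟨j, fun l hl => ?_⟩
  rw [hj l hl, Pi.mul_apply, Pi.inv_apply, hjA l (Finset.mem_insert_of_mem hl),
    hjB l (Finset.mem_insert_of_mem hl), hAB]
  by_cases h : l = l₀
  · subst h; simp [hrow]
  · simp [Function.update_of_ne h, Pi.mulSingle_eq_of_ne h]

theorem exists_col_eqOn (hrow : ∀ j : I, P lL j = 1) (hcol : ∀ m : Λ, P m iI = 1)
    (hhom : IsCSHomogeneous (reesMul P) (reesInv P))
    (hΛ : {l | l ≠ lL}.Infinite) {L : Finset Λ} (hL : lL ∉ L)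
    {v : Λ → G} (hv : ∀ l ∈ L, v l ∈ reesEntries P) : ∃ j, ∀ l ∈ L, P l j = v l := by
  classical
  obtain ⟨j, hj⟩ := mulIndicator_mem_of_mulSingle_mem (K := colPatterns hrow hcol hhom L)
    fun l hl => mulSingle_mem_colPatterns hrow hcol hhom hΛ L (ne_of_mem_of_not_mem hl hL)
      (hv l hl)
  exact ⟨j, fun l hl => by rw [hj l hl, Set.mulIndicator_of_mem (Finset.mem_coe.2 hl)]⟩

theorem exists_col_generic (hrow : ∀ j : I, P lL j = 1) (hcol : ∀ m : Λ, P m iI = 1)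
    (hhom : IsCSHomogeneous (reesMul P) (reesInv P))
    (hinf : (reesEntries P).Infinite) (hΛ : {l | l ≠ lL}.Infinite)
    (A : Finset {l : Λ // l ≠ lL}) (α : {l : Λ // l ≠ lL} → G)
    (hα : ∀ a, α a ∈ reesEntries P) :
    ∃ x : {i : I // i ≠ iI}, ∀ a ∈ A, P a.1 x.1 = α a := by
  classical
  set A' := A.map (Function.Embedding.subtype _)
  -- an extra row with an entry `g ≠ 1` keeps the column off `iI`
  obtain ⟨g, hg, hg1⟩ := (hinf.sdiff (Set.finite_singleton 1)).nonempty
  obtain ⟨l', hl'lL, hl'A⟩ := (hΛ.sdiff A'.finite_toSet).nonempty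
  set v : Λ → G := fun l => if l = l' then g else if h : l = lL then 1 else α ⟨l, h⟩
  have hA' : ∀ a ∈ A, a.1 ∈ A' ∧ a.1 ≠ l' := fun a ha =>
    ⟨Finset.mem_map_of_mem _ ha, fun h => hl'A (h ▸ Finset.mem_map_of_mem _ ha)⟩
  have hv : ∀ a ∈ A, v a.1 = α a := fun a ha => by simp [v, (hA' a ha).2, a.2]
  have hL : lL ∉ insert l' A' := by
    simp only [Finset.mem_insert, Finset.mem_map, Function.Embedding.coe_subtype, not_or,
      not_exists, not_and, A']
    exact ⟨Ne.symm hl'lL, fun a _ => a.2⟩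
  have hvL : ∀ l ∈ insert l' A', v l ∈ reesEntries P := by
    intro l hl
    rcases Finset.mem_insert.1 hl with rfl | hl
    · simpa [v] using hg
    · obtain ⟨a, ha, rfl⟩ := Finset.mem_map.1 hl
      exact hv a ha ▸ hα a
  obtain ⟨j, hj⟩ := exists_col_eqOn hrow hcol hhom hΛ hL hvL
  refine ⟨⟨j, fun h => hg1 ?_⟩, fun a ha => ?_⟩
  · simpa [v, h, hcol, eq_comm] using hj l' (Finset.mem_insert_self _ _)
  · rw [hj a.1 (Finset.mem_insert_of_mem (hA' a ha).1), hv a ha]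

end Normalised

section Transpose

variable {G I Λ : Type*}

/-- `(i, g, l) ↦ (l, op g, i)` is an anti-isomorphism
`M[G;I,Λ;P] → M[Gᵐᵒᵖ;Λ,I;reesTranspose P]`, which exchanges the roles of rows and
columns. -/
def reesTranspose (P : Λ → I → G) : I → Λ → Gᵐᵒᵖ :=
  fun i l => MulOpposite.op (P l i)

@[simps]
def reesTransposeEquiv : I × G × Λ ≃ Λ × Gᵐᵒᵖ × I where
  toFun x := (x.2.2, MulOpposite.op x.2.1, x.1)
  invFun y := (y.2.2, y.2.1.unop, y.1)
  left_inv _ := rfl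
  right_inv _ := rfl

theorem IsCSHomogeneous.transpose [Group G] {P : Λ → I → G}
    (hhom : IsCSHomogeneous (reesMul P) (reesInv P)) :
    IsCSHomogeneous (reesMul (reesTranspose P)) (reesInv (reesTranspose P)) :=
  hhom.of_antiEquiv reesTransposeEquiv
    (fun _ _ => by simp [reesMul, reesTranspose, mul_assoc])
    (fun _ => by simp [reesInv, reesTranspose, mul_assoc])

theorem reesEntries_reesTranspose (P : Λ → I → G) :
    reesEntries (reesTranspose P) = MulOpposite.op '' reesEntries P := by
  ext g
  constructor
  · rintro ⟨i, l, rfl⟩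
    exact ⟨P l i, ⟨l, i, rfl⟩, rfl⟩
  · rintro ⟨_, ⟨l, i, rfl⟩, rfl⟩
    exact ⟨i, l, rfl⟩

end Transpose

theorem rees_homogeneous_infinite_generic_general {G I Λ : Type*} [Group G]
    (P : Λ → I → G) (iI : I) (lL : Λ)
    (hrow : ∀ j : I, P lL j = 1) (hcol : ∀ m : Λ, P m iI = 1)
    (hhom : IsCSHomogeneous (reesMul P) (reesInv P))
    (hinf : (reesEntries P).Infinite) :
    (∀ g ∈ reesEntries P, ∃ l : Λ, l ≠ lL ∧ ∃ i : I, i ≠ iI ∧ P l i = g) ∧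
    Infinite {l : Λ // l ≠ lL} ∧ Infinite {i : I // i ≠ iI} ∧
    (∀ (A : Finset {l : Λ // l ≠ lL}) (α : {l : Λ // l ≠ lL} → G),
      (∀ a : {l : Λ // l ≠ lL}, α a ∈ reesEntries P) →
      ∃ x : {i : I // i ≠ iI}, ∀ a ∈ A, P a.1 x.1 = α a) ∧
    (∀ (B : Finset {i : I // i ≠ iI}) (β : {i : I // i ≠ iI} → G),
      (∀ b : {i : I // i ≠ iI}, β b ∈ reesEntries P) →
      ∃ z : {l : Λ // l ≠ lL}, ∀ b ∈ B, P z.1 b.1 = β b) := by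
  have hrowT : ∀ l : Λ, reesTranspose P iI l = 1 := fun l => by simp [reesTranspose, hcol]
  have hcolT : ∀ j : I, reesTranspose P j lL = 1 := fun j => by simp [reesTranspose, hrow]
  have hinfT : (reesEntries (reesTranspose P)).Infinite := by
    rw [reesEntries_reesTranspose]; exact hinf.image MulOpposite.op_injective.injOn
  have hI := infinite_ne_col hrow hcol hhom hinf
  have hΛ := infinite_ne_col hrowT hcolT hhom.transpose hinfT
  have hcols := exists_col_generic hrow hcol hhom hinf hΛ
  refine ⟨fun g hg => ?_, hΛ.to_subtype, hI.to_subtype, hcols, fun B β hβ => ?_⟩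
  · obtain ⟨l, hl⟩ := hΛ.nonempty
    obtain ⟨x, hx⟩ := hcols {⟨l, hl⟩} (fun _ => g) (fun _ => hg)
    exact ⟨l, hl, x.1, x.2, hx _ (Finset.mem_singleton_self _)⟩
  · obtain ⟨z, hz⟩ := exists_col_generic hrowT hcolT hhom.transpose hinfT hI B
      (MulOpposite.op ∘ β)
      fun b => reesEntries_reesTranspose P ▸ Set.mem_image_of_mem _ (hβ b)
    exact ⟨z, fun b hb => MulOpposite.op_injective (hz b hb)⟩

/-- If a normalised Rees matrix semigroup `S = M[G;I,Λ;P]` (countable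
group, countable index sets) is homogeneous as a completely simple semigroup and the
entry set `G^P` is infinite, then in the induced edge-coloured bipartite graph `Γ(S)`
(left set `Λ∖{1_Λ}`, right set `I∖{1_I}`, edge `(λ,i)` coloured `P(λ,i)`) every element
of `G^P` occurs as a colour, and `Γ(S)` is `G^P`-generic: both sides are (countably)
infinite and every finitely specified `G^P`-colour pattern is realised by a witness. -/
theorem rees_homogeneous_infinite_generic {G I Λ : Type*} [Group G] [Countable G]
    [Countable I] [Countable Λ]
    (P : Λ → I → G) (iI : I) (lL : Λ)
    (hrow : ∀ j : I, P lL j = 1) (hcol : ∀ m : Λ, P m iI = 1)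
    (hhom : IsCSHomogeneous (reesMul P) (reesInv P))
    (hinf : (reesEntries P).Infinite) :
    (∀ g ∈ reesEntries P, ∃ l : Λ, l ≠ lL ∧ ∃ i : I, i ≠ iI ∧ P l i = g) ∧
    Infinite {l : Λ // l ≠ lL} ∧ Infinite {i : I // i ≠ iI} ∧
    (∀ (A : Finset {l : Λ // l ≠ lL}) (α : {l : Λ // l ≠ lL} → G),
      (∀ a : {l : Λ // l ≠ lL}, α a ∈ reesEntries P) →
      ∃ x : {i : I // i ≠ iI}, ∀ a ∈ A, P a.1 x.1 = α a) ∧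
    (∀ (B : Finset {i : I // i ≠ iI}) (β : {i : I // i ≠ iI} → G),
      (∀ b : {i : I // i ≠ iI}, β b ∈ reesEntries P) →
      ∃ z : {l : Λ // l ≠ lL}, ∀ b ∈ B, P z.1 b.1 = β b) :=
  rees_homogeneous_infinite_generic_general P iI lL hrow hcol hhom hinf
end
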